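/- arXiv:2302.12080 — 5 statements merged into one kernel-verified Lean document; each statement's English description precedes it below -/
import Mathlib

section
/- Let φ and (a_j) be as in the context. For every integer n ≥ 1, the set F_φ^{(a_n)} := {x ∈ (0,1) irrational : u_k(x) ≤ φ(k) for all k ≤ a_n} has Lebesgue measure μ(F_φ^{(a_n)}) < ∏_{j=1}^{n} (1 − 1/(3(φ(a_j)+2))). -/
/-!
For `t ≥ 0` the function `H_t(y) = (1 + t) / (1 + t y)²` is a probability density on `(0, 1)`,
and pulling `H_t(y) dy` back along the inverse branch `y = 1 / (c + z)` of the Gauss map gives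
`m_t(c) · H_{1/(c+t)}(z) dz`, where `m_t(c) = (1 + t) / ((c + t)(c + t + 1))` is the `H_t`-mass of
the cylinder `{u₁ = c}`. The family `H_t` is thus stable under peeling off the first digit, and
since `∑_{c ≤ M} m_t(c) = 1 - (1 + t) / (M + 1 + t) ≤ M / (M + 1)`, induction on the number of
constrained digits bounds the `H_t`-mass, and for `t = 0` the Lebesgue measure, of
`{u_k ≤ ψ(k) for k ≤ m}` by `∏ ψ(k) / (ψ(k) + 1)` (a factor `1` when `ψ(k) = ∞`).
It remains to note that `M / (M + 1) < 1 - 1 / (3 (M + 2))`.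
-/

open MeasureTheory

/-- The Gauss map `y ↦ {1/y}`. -/
noncomputable def gaussMap (y : ℝ) : ℝ := Int.fract y⁻¹

/-- For an irrational `x ∈ (0,1)`, `cfCoeff x n` is the `n`-th coefficient `u_n(x)`
(`n ≥ 1`) of the continued fraction expansion `x = [0; u_1(x), u_2(x), …]`. -/
noncomputable def cfCoeff (x : ℝ) (n : ℕ) : ℕ := ⌊(gaussMap^[n - 1] x)⁻¹⌋₊

open Set
open scoped ENNReal

lemma Finset.prod_lt_prod_of_nonempty_of_nonneg {ι R : Type*} [CommSemiring R] [PartialOrder R]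
    [IsStrictOrderedRing R] {s : Finset ι} {f g : ι → R} (hs : s.Nonempty)
    (hf : ∀ i ∈ s, 0 ≤ f i) (hfg : ∀ i ∈ s, f i < g i) : ∏ i ∈ s, f i < ∏ i ∈ s, g i := by
  induction hs using Finset.Nonempty.cons_induction with
  | singleton i => simpa using hfg i (Finset.mem_singleton_self i)
  | cons i s _ _ ih =>
    simp only [Finset.prod_cons, Finset.mem_cons, forall_eq_or_imp] at hf hfg ⊢
    exact mul_lt_mul'' hfg.1 (ih hf.2 hfg.2) hf.1 (Finset.prod_nonneg hf.2)

lemma Finset.prod_Icc_le_prod_Icc_comp {N : Type*} [CommMonoid N] [Preorder N] [MulLeftMono N]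
    {f : ℕ → N} (hf : ∀ k, f k ≤ 1) {a : ℕ → ℕ} (ha : StrictMonoOn a (Set.Ici 1))
    (ha1 : ∀ j, 1 ≤ j → 1 ≤ a j) (n : ℕ) :
    ∏ k ∈ Finset.Icc 1 (a n), f k ≤ ∏ j ∈ Finset.Icc 1 n, f (a j) := by
  rw [← Finset.prod_image (ha.injOn.mono fun j hj ↦ (Finset.mem_Icc.1 hj).1)]
  refine Finset.prod_le_prod_of_subset_of_le_one' (fun k hk ↦ ?_) fun k _ _ ↦ hf k
  obtain ⟨j, hj, rfl⟩ := Finset.mem_image.1 hk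
  obtain ⟨hj1, hjn⟩ := Finset.mem_Icc.1 hj
  exact Finset.mem_Icc.2 ⟨ha1 j hj1, ha.monotoneOn hj1 (hj1.trans hjn) hjn⟩

lemma div_add_one_lt_one_sub_one_div_three_mul_add_two {x : ℝ} (hx : 0 ≤ x) :
    x / (x + 1) < 1 - 1 / (3 * (x + 2)) := by
  rw [lt_sub_iff_add_lt, div_add_div _ _ (by positivity) (by positivity),
    div_lt_one (by positivity)]
  nlinarith

lemma Finset.prod_Icc_one_add_one {M : Type*} [CommMonoid M] (f : ℕ → M) (m : ℕ) :
    ∏ k ∈ Finset.Icc 1 (m + 1), f k = f 1 * ∏ k ∈ Finset.Icc 1 m, f (k + 1) := by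
  rw [← Finset.insert_Icc_add_one_left_eq_Icc (by omega), Finset.prod_insert (by simp),
    ← Finset.map_add_right_Icc, Finset.prod_map]
  rfl

lemma MeasureTheory.lintegral_biUnion_le {α β : Type*} [MeasurableSpace α] {μ : Measure α}
    {T : Set β} (hT : T.Countable) (s : β → Set α) (f : α → ℝ≥0∞) :
    ∫⁻ a in ⋃ i ∈ T, s i, f a ∂μ ≤ ∑' i : T, ∫⁻ a in s i, f a ∂μ := by
  rw [← lintegral_sum_measure]
  exact lintegral_mono' (Measure.restrict_biUnion_le hT) le_rfl

section GaussMap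

variable {y : ℝ}

lemma measurable_gaussMap : Measurable gaussMap :=
  measurable_fract.comp measurable_inv

lemma measurable_cfCoeff (k : ℕ) : Measurable fun y ↦ cfCoeff y k :=
  Nat.measurable_floor.comp (measurable_gaussMap.iterate (k - 1)).inv

lemma irrational_gaussMap (h : Irrational y) : Irrational (gaussMap y) :=
  h.inv.sub_intCast _

lemma gaussMap_mem_Ioo (h : Irrational y) : gaussMap y ∈ Ioo (0 : ℝ) 1 := by
  refine ⟨(Int.fract_nonneg _).lt_of_ne fun h0 ↦ ?_, Int.fract_lt_one _⟩
  exact irrational_gaussMap h ⟨0, by rw [gaussMap, ← h0, Rat.cast_zero]⟩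

lemma cfCoeff_succ (y : ℝ) {k : ℕ} (hk : 1 ≤ k) :
    cfCoeff y (k + 1) = cfCoeff (gaussMap y) k := by
  obtain ⟨m, rfl⟩ := Nat.exists_eq_add_of_le' hk
  simp only [cfCoeff, Nat.add_sub_cancel, Function.iterate_succ_apply]

lemma one_le_cfCoeff_one (hy : y ∈ Ioo (0 : ℝ) 1) : 1 ≤ cfCoeff y 1 :=
  Nat.one_le_floor_iff _ |>.mpr ((one_lt_inv₀ hy.1).mpr hy.2).le

lemma inv_cfCoeff_one_add_gaussMap (hy : 0 < y) : ((cfCoeff y 1 : ℝ) + gaussMap y)⁻¹ = y := by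
  rw [cfCoeff, gaussMap, Function.iterate_zero_apply,
    natCast_floor_eq_intCast_floor (by positivity), Int.floor_add_fract, inv_inv]

end GaussMap

def cfBoundedSet (m : ℕ) (ψ : ℕ → ℕ∞) : Set ℝ :=
  {y | y ∈ Ioo (0 : ℝ) 1 ∧ Irrational y ∧ ∀ k, 1 ≤ k → k ≤ m → (cfCoeff y k : ℕ∞) ≤ ψ k}

lemma measurableSet_setOf_irrational : MeasurableSet {x : ℝ | Irrational x} :=
  (countable_range ((↑) : ℚ → ℝ)).measurableSet.compl

lemma measurableSet_cfBoundedSet (m : ℕ) (ψ : ℕ → ℕ∞) : MeasurableSet (cfBoundedSet m ψ) := by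
  have hcf (k : ℕ) : Measurable fun y ↦ (cfCoeff y k : ℕ∞) ≤ ψ k :=
    measurableSet_setOfPred.1 <|
      measurable_cfCoeff k (MeasurableSet.of_discrete (s := {c : ℕ | (c : ℕ∞) ≤ ψ k}))
  refine measurableSet_Ioo.inter (measurableSet_setOf_irrational.inter ?_)
  exact measurableSet_setOfPred.2 <| Measurable.forall fun k ↦
    measurable_const.imp (measurable_const.imp (hcf k))

lemma cfBoundedSet_subset_Ioo (m : ℕ) (ψ : ℕ → ℕ∞) : cfBoundedSet m ψ ⊆ Ioo 0 1 :=
  fun _ hy ↦ hy.1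

lemma cfBoundedSet_succ_subset (m : ℕ) (ψ : ℕ → ℕ∞) :
    cfBoundedSet (m + 1) ψ ⊆ ⋃ c ∈ {c : ℕ | 1 ≤ c ∧ (c : ℕ∞) ≤ ψ 1},
      (fun z ↦ ((c : ℝ) + z)⁻¹) '' cfBoundedSet m (fun k ↦ ψ (k + 1)) := by
  rintro y ⟨hy, hirr, hcf⟩
  refine mem_biUnion ⟨one_le_cfCoeff_one hy, hcf 1 le_rfl (by omega)⟩
    ⟨gaussMap y, ⟨gaussMap_mem_Ioo hirr, irrational_gaussMap hirr, fun k hk hkm ↦ ?_⟩,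
      inv_cfCoeff_one_add_gaussMap hy.1⟩
  rw [← cfCoeff_succ y hk]
  exact hcf (k + 1) (by omega) (by omega)

noncomputable def boundFactor (M : ℕ∞) : ℝ≥0∞ :=
  if M = ⊤ then 1 else ENNReal.ofReal (M.toNat / (M.toNat + 1))

@[simp]
lemma boundFactor_top : boundFactor ⊤ = 1 := if_pos rfl

@[simp]
lemma boundFactor_coe (m : ℕ) : boundFactor m = ENNReal.ofReal (m / (m + 1)) := by
  simp [boundFactor]

lemma boundFactor_le_one (M : ℕ∞) : boundFactor M ≤ 1 := by
  induction M using ENat.recTopCoe with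
  | top => simp
  | coe m => exact ENNReal.ofReal_le_one.2 (div_le_one_of_le₀ (by linarith) (by positivity))

section Density

variable {t : ℝ}

noncomputable def cylinderDensity (t y : ℝ) : ℝ≥0∞ := ENNReal.ofReal ((1 + t) / (1 + t * y) ^ 2)

lemma measurable_cylinderDensity (t : ℝ) : Measurable (cylinderDensity t) :=
  Measurable.ennreal_ofReal (by fun_prop)

lemma setLIntegral_cylinderDensity_Ioo (ht : 0 ≤ t) :
    ∫⁻ y in Ioo 0 1, cylinderDensity t y = 1 := by
  have hpos : ∀ y ∈ Icc (0 : ℝ) 1, 0 < 1 + t * y := fun y hy ↦ by nlinarith [hy.1]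
  have hderiv : ∀ y ∈ uIcc (0 : ℝ) 1,
      HasDerivAt (fun y ↦ (1 + t) * y / (1 + t * y)) ((1 + t) / (1 + t * y) ^ 2) y := by
    intro y hy
    rw [uIcc_of_le zero_le_one] at hy
    refine (((hasDerivAt_id y).const_mul (1 + t)).div
      (((hasDerivAt_id y).const_mul t).const_add 1) (hpos y hy).ne').congr_deriv ?_
    simp only [id]
    ring
  have hcont : ContinuousOn (fun y ↦ (1 + t) / (1 + t * y) ^ 2) (Icc 0 1) :=
    continuousOn_const.div (by fun_prop) fun y hy ↦ (pow_pos (hpos y hy) 2).ne'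
  unfold cylinderDensity
  rw [← ofReal_integral_eq_lintegral_ofReal
      (hcont.integrableOn_Icc.mono_set Ioo_subset_Icc_self)
      (ae_of_all _ fun y ↦ by positivity), ← integral_Ioc_eq_integral_Ioo,
    ← intervalIntegral.integral_of_le zero_le_one,
    intervalIntegral.integral_eq_sub_of_hasDerivAt hderiv
      (hcont.intervalIntegrable_of_Icc zero_le_one)]
  simp [div_self (by linarith : 1 + t ≠ 0)]

noncomputable def cylinderMass (t : ℝ) (c : ℕ) : ℝ := (1 + t) / ((c + t) * (c + t + 1))

lemma cylinderMass_nonneg (ht : 0 ≤ t) (c : ℕ) : 0 ≤ cylinderMass t c := by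
  unfold cylinderMass; positivity

lemma setLIntegral_cylinderDensity_image_inv_add {s : Set ℝ} (hs : MeasurableSet s)
    (hs0 : s ⊆ Ici 0) (ht : 0 ≤ t) {c : ℕ} (hc : 1 ≤ c) :
    ∫⁻ y in (fun z ↦ ((c : ℝ) + z)⁻¹) '' s, cylinderDensity t y =
      ENNReal.ofReal (cylinderMass t c) * ∫⁻ z in s, cylinderDensity ((c : ℝ) + t)⁻¹ z := by
  have hc : (1 : ℝ) ≤ c := by exact_mod_cast hc
  have hpos : ∀ z ∈ s, 0 < (c : ℝ) + z := fun z hz ↦ by linarith [mem_Ici.1 (hs0 hz)]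
  have hderiv : ∀ z ∈ s, HasDerivWithinAt (fun z ↦ ((c : ℝ) + z)⁻¹)
      (-1 / ((c : ℝ) + z) ^ 2) s z := fun z hz ↦
    (((hasDerivAt_id' z).const_add (c : ℝ)).inv (hpos z hz).ne').hasDerivWithinAt
  have hinj : InjOn (fun z ↦ ((c : ℝ) + z)⁻¹) s := fun z₁ _ z₂ _ h ↦ by
    simpa using inv_inj.mp h
  rw [lintegral_image_eq_lintegral_abs_deriv_mul hs hderiv hinj,
    ← lintegral_const_mul _ (measurable_cylinderDensity _)]
  refine setLIntegral_congr_fun hs fun z hzs ↦ ?_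
  have hz := mem_Ici.1 (hs0 hzs)
  rw [cylinderDensity, cylinderDensity, ← ENNReal.ofReal_mul (abs_nonneg _),
    ← ENNReal.ofReal_mul (cylinderMass_nonneg ht c)]
  congr 1
  have : (0 : ℝ) < c + t := by linarith
  rw [abs_div, abs_neg, abs_one, abs_of_pos (pow_pos (hpos z hzs) 2), cylinderMass]
  field_simp
  ring

lemma sum_cylinderMass_Icc (ht : 0 ≤ t) (N : ℕ) :
    ∑ c ∈ Finset.Icc 1 N, cylinderMass t c = 1 - (1 + t) / (N + 1 + t) := by
  induction N with
  | zero => simp [div_self (by linarith : 1 + t ≠ 0)]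
  | succ N ih =>
    rw [Finset.sum_Icc_succ_top (by omega), ih, cylinderMass]
    have : (0 : ℝ) < N + 1 + t := by positivity
    push_cast
    field_simp
    ring

lemma sum_cylinderMass_le (ht : 0 ≤ t) {F : Finset ℕ} {N : ℕ} (hF : F ⊆ Finset.Icc 1 N) :
    ∑ c ∈ F, cylinderMass t c ≤ N / (N + 1) := calc
  ∑ c ∈ F, cylinderMass t c ≤ ∑ c ∈ Finset.Icc 1 N, cylinderMass t c :=
    Finset.sum_le_sum_of_subset_of_nonneg hF fun c _ _ ↦ cylinderMass_nonneg ht c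
  _ = 1 - (1 + t) / (N + 1 + t) := sum_cylinderMass_Icc ht N
  _ ≤ N / (N + 1) := by
    have hN : (0 : ℝ) ≤ N := N.cast_nonneg
    rw [sub_le_iff_le_add, div_add_div _ _ (by positivity) (by positivity),
      le_div_iff₀ (by positivity)]
    nlinarith

lemma tsum_cylinderMass_le (ht : 0 ≤ t) (M : ℕ∞) :
    ∑' c : {c : ℕ | 1 ≤ c ∧ (c : ℕ∞) ≤ M}, ENNReal.ofReal (cylinderMass t c) ≤ boundFactor M := by
  refine ENNReal.tsum_eq_iSup_sum.trans_le (iSup_le fun F ↦ ?_)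
  have hmap :=
    Finset.sum_map F (Function.Embedding.subtype _) fun c ↦ ENNReal.ofReal (cylinderMass t c)
  rw [Function.Embedding.coe_subtype] at hmap
  rw [← hmap, ← ENNReal.ofReal_sum_of_nonneg fun c _ ↦ cylinderMass_nonneg ht c]
  induction M using ENat.recTopCoe with
  | top =>
    rw [boundFactor_top]
    refine ENNReal.ofReal_le_one.2 ((sum_cylinderMass_le ht (N := F.sup Subtype.val) ?_).trans
      (div_le_one_of_le₀ (by linarith) (by positivity)))
    intro c hc
    obtain ⟨x, hx, rfl⟩ := Finset.mem_map.1 hc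
    exact Finset.mem_Icc.2 ⟨x.2.1, Finset.le_sup (f := Subtype.val) hx⟩
  | coe m =>
    rw [boundFactor_coe]
    refine ENNReal.ofReal_le_ofReal (sum_cylinderMass_le ht fun c hc ↦ ?_)
    obtain ⟨x, hx, rfl⟩ := Finset.mem_map.1 hc
    exact Finset.mem_Icc.2 ⟨x.2.1, by exact_mod_cast x.2.2⟩

lemma setLIntegral_cylinderDensity_cfBoundedSet_le (m : ℕ) (ψ : ℕ → ℕ∞) (ht : 0 ≤ t) :
    ∫⁻ y in cfBoundedSet m ψ, cylinderDensity t y ≤ ∏ k ∈ Finset.Icc 1 m, boundFactor (ψ k) := by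
  induction m generalizing ψ t with
  | zero =>
    simpa using (lintegral_mono_set (cfBoundedSet_subset_Ioo 0 ψ)).trans_eq
      (setLIntegral_cylinderDensity_Ioo ht)
  | succ m ih =>
    set T := {c : ℕ | 1 ≤ c ∧ (c : ℕ∞) ≤ ψ 1}
    set S := cfBoundedSet m fun k ↦ ψ (k + 1)
    set Q := ∏ k ∈ Finset.Icc 1 m, boundFactor (ψ (k + 1))
    calc ∫⁻ y in cfBoundedSet (m + 1) ψ, cylinderDensity t y
        ≤ ∫⁻ y in ⋃ c ∈ T, (fun z ↦ ((c : ℝ) + z)⁻¹) '' S, cylinderDensity t y :=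
          lintegral_mono_set (cfBoundedSet_succ_subset m ψ)
      _ ≤ ∑' c : T, ∫⁻ y in (fun z ↦ ((c : ℝ) + z)⁻¹) '' S, cylinderDensity t y :=
          lintegral_biUnion_le T.to_countable _ _
      _ ≤ ∑' c : T, ENNReal.ofReal (cylinderMass t c) * Q := ENNReal.tsum_le_tsum fun c ↦ by
          rw [setLIntegral_cylinderDensity_image_inv_add (measurableSet_cfBoundedSet m _)
            (fun z hz ↦ hz.1.1.le) ht c.2.1]
          exact mul_le_mul_right (ih _ (by positivity)) _
      _ ≤ boundFactor (ψ 1) * Q := by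
          rw [ENNReal.tsum_mul_right]
          exact mul_le_mul_left (tsum_cylinderMass_le ht _) _
      _ = ∏ k ∈ Finset.Icc 1 (m + 1), boundFactor (ψ k) :=
          (Finset.prod_Icc_one_add_one (boundFactor ∘ ψ) m).symm

end Density

lemma volume_cfBoundedSet_le (m : ℕ) (ψ : ℕ → ℕ∞) :
    volume (cfBoundedSet m ψ) ≤ ∏ k ∈ Finset.Icc 1 m, boundFactor (ψ k) := by
  simpa [cylinderDensity] using setLIntegral_cylinderDensity_cfBoundedSet_le m ψ le_rfl

theorem stmt2_general
    (φ : ℕ → ℕ∞)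
    (a : ℕ → ℕ) (hamono : StrictMonoOn a (Set.Ici 1))
    (harange : ∀ j, 1 ≤ j → 1 ≤ a j ∧ φ (a j) ≠ ⊤)
    (n : ℕ) (hn : 1 ≤ n) :
    (volume {x : ℝ | x ∈ Set.Ioo (0 : ℝ) 1 ∧ Irrational x ∧
        ∀ k, 1 ≤ k → k ≤ a n → (cfCoeff x k : ℕ∞) ≤ φ k}).toReal
      < ∏ j ∈ Finset.Icc 1 n, (1 - 1 / (3 * (((φ (a j)).toNat : ℝ) + 2))) := by
  have hfactor : ∀ j ∈ Finset.Icc 1 n, boundFactor (φ (a j)) =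
      ENNReal.ofReal ((φ (a j)).toNat / ((φ (a j)).toNat + 1)) := fun j hj ↦ by
    rw [← ENat.natCast_toNat (harange j (Finset.mem_Icc.1 hj).1).2, boundFactor_coe,
      ENat.toNat_natCast]
  have hvol := (volume_cfBoundedSet_le (a n) φ).trans (Finset.prod_Icc_le_prod_Icc_comp
    (fun k ↦ boundFactor_le_one (φ k)) hamono (fun j hj ↦ (harange j hj).1) n)
  rw [Finset.prod_congr rfl hfactor, ← ENNReal.ofReal_prod_of_nonneg fun _ _ ↦ by positivity]
    at hvol
  calc _ ≤ ∏ j ∈ Finset.Icc 1 n, ((φ (a j)).toNat / ((φ (a j)).toNat + 1) : ℝ) :=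
        ENNReal.toReal_le_of_le_ofReal (Finset.prod_nonneg fun _ _ ↦ by positivity) hvol
    _ < _ := Finset.prod_lt_prod_of_nonempty_of_nonneg (Finset.nonempty_Icc.2 hn)
        (fun _ _ ↦ by positivity) fun _ _ ↦ div_add_one_lt_one_sub_one_div_three_mul_add_two
          (Nat.cast_nonneg _)

theorem stmt2
    (φ : ℕ → ℕ∞) (hφ1 : φ 1 ≠ ⊤)
    (hφinf : {k : ℕ | 1 ≤ k ∧ φ k ≠ ⊤}.Infinite)
    (a : ℕ → ℕ) (hamono : StrictMonoOn a (Set.Ici 1))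
    (harange : ∀ j, 1 ≤ j → 1 ≤ a j ∧ φ (a j) ≠ ⊤)
    (haonto : ∀ k, 1 ≤ k → φ k ≠ ⊤ → ∃ j, 1 ≤ j ∧ a j = k)
    (n : ℕ) (hn : 1 ≤ n) :
    (volume {x : ℝ | x ∈ Set.Ioo (0 : ℝ) 1 ∧ Irrational x ∧
        ∀ k, 1 ≤ k → k ≤ a n → (cfCoeff x k : ℕ∞) ≤ φ k}).toReal
      < ∏ j ∈ Finset.Icc 1 n, (1 - 1 / (3 * (((φ (a j)).toNat : ℝ) + 2))) :=
  stmt2_general φ a hamono harange n hn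
end

section
/- For every integer N ≥ 1, the sum over all tuples (k_1,…,k_N) of positive integers of 1/q_N(k_1,…,k_N)² converges and is strictly less than 2. -/
/-- Denominators of the convergents of `[0; k_1, k_2, …]`, shifted by one:
`cfQ k (j+1) = q_j`, with `q_{-1} = 0`, `q_0 = 1`, `q_j = k_j q_{j-1} + q_{j-2}`. -/
def cfQ (k : ℕ → ℕ) : ℕ → ℕ
  | 0 => 0
  | 1 => 1
  | (j + 2) => k (j + 1) * cfQ k (j + 1) + cfQ k j

/-- Extend a tuple `(k_1,…,k_N)` (given as `t : Fin N → ℕ+`) to a function `ℕ → ℕ`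
with `k_j = t (j-1)` for `1 ≤ j ≤ N`. -/
def tupleExt {N : ℕ} (t : Fin N → ℕ+) : ℕ → ℕ :=
  fun j => if h : j - 1 < N then (t ⟨j - 1, h⟩ : ℕ) else 1

lemma tupleExt_one_le {N : ℕ} (t : Fin N → ℕ+) (i : ℕ) : 1 ≤ tupleExt t i := by
  unfold tupleExt
  split
  · exact (t _).one_le
  · exact le_rfl

/-- `cfQ` only depends on the values of `k` at indices `1, …, j-1`. -/
lemma cfQ_congr (k k' : ℕ → ℕ) : ∀ j, (∀ i, 1 ≤ i → i < j → k i = k' i) →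
    cfQ k j = cfQ k' j
  | 0 => fun _ => rfl
  | 1 => fun _ => rfl
  | (j + 2) => fun h => by
    rw [cfQ, cfQ, cfQ_congr k k' (j + 1) (fun i h1 h2 => h i h1 (h2.trans (by omega))),
      cfQ_congr k k' j (fun i h1 h2 => h i h1 (by omega)), h (j + 1) (by omega) (by omega)]

lemma cfQ_mono_one_le (k : ℕ → ℕ) (hk : ∀ i, 1 ≤ k i) :
    ∀ j, cfQ k j ≤ cfQ k (j + 1) ∧ 1 ≤ cfQ k (j + 1) := by
  intro j
  induction j with
  | zero => exact ⟨by simp [cfQ], by simp [cfQ]⟩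
  | succ j ih =>
    have h : cfQ k (j + 2) = k (j + 1) * cfQ k (j + 1) + cfQ k j := rfl
    constructor
    · rw [h]
      calc cfQ k (j + 1) = 1 * cfQ k (j + 1) := (one_mul _).symm
        _ ≤ k (j + 1) * cfQ k (j + 1) + cfQ k j :=
          Nat.le_add_right_of_le (Nat.mul_le_mul_right _ (hk _))
    · rw [h]
      calc 1 ≤ cfQ k (j + 1) := ih.2
        _ = 1 * cfQ k (j + 1) := (one_mul _).symm
        _ ≤ k (j + 1) * cfQ k (j + 1) + cfQ k j :=
          Nat.le_add_right_of_le (Nat.mul_le_mul_right _ (hk _))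

lemma cfQ_tupleExt_pos {N : ℕ} (t : Fin N → ℕ+) (j : ℕ) :
    1 ≤ cfQ (tupleExt t) (j + 1) :=
  (cfQ_mono_one_le (tupleExt t) (tupleExt_one_le t) j).2

lemma cfQ_tupleExt_mono {N : ℕ} (t : Fin N → ℕ+) (j : ℕ) :
    cfQ (tupleExt t) j ≤ cfQ (tupleExt t) (j + 1) :=
  (cfQ_mono_one_le (tupleExt t) (tupleExt_one_le t) j).1

lemma tupleExt_snoc_agree {N : ℕ} (s : Fin N → ℕ+) (k : ℕ+) (i : ℕ) (h1 : 1 ≤ i)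
    (h2 : i ≤ N) : tupleExt (Fin.snoc s k : Fin (N + 1) → ℕ+) i = tupleExt s i := by
  have hi : i - 1 < N := by omega
  have hi' : i - 1 < N + 1 := by omega
  unfold tupleExt
  rw [dif_pos hi', dif_pos hi]
  have : (⟨i - 1, hi'⟩ : Fin (N + 1)) = Fin.castSucc ⟨i - 1, hi⟩ := by
    ext; simp
  rw [this, Fin.snoc_castSucc]

lemma cfQ_snoc_eq {N : ℕ} (s : Fin N → ℕ+) (k : ℕ+) {j : ℕ} (hj : j ≤ N + 1) :
    cfQ (tupleExt (Fin.snoc s k : Fin (N + 1) → ℕ+)) j = cfQ (tupleExt s) j :=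
  cfQ_congr _ _ j (fun i h1 h2 => tupleExt_snoc_agree s k i h1 (by omega))

lemma tupleExt_snoc_last {N : ℕ} (s : Fin N → ℕ+) (k : ℕ+) :
    tupleExt (Fin.snoc s k : Fin (N + 1) → ℕ+) (N + 1) = k := by
  have h : N + 1 - 1 < N + 1 := by omega
  unfold tupleExt
  rw [dif_pos h]
  have : (⟨N + 1 - 1, h⟩ : Fin (N + 1)) = Fin.last N := by ext; simp
  rw [this, Fin.snoc_last]

/-- The telescoping sum over `ℕ+`. -/
lemma telescope (a b : ℝ) (ha : 1 ≤ a) (hb : 0 ≤ b) :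
    HasSum (fun k : ℕ+ => 1 / (((k : ℝ) * a + b) * (((k : ℝ) * a + b) + a)))
      (1 / (a * (a + b))) := by
  have ha0 : 0 < a := lt_of_lt_of_le one_pos ha
  rw [← Equiv.pnatEquivNat.symm.hasSum_iff]
  have hcoe : ∀ n : ℕ, ((Equiv.pnatEquivNat.symm n : ℕ+) : ℝ) = (n : ℝ) + 1 := by
    intro n
    simp [Equiv.pnatEquivNat, Nat.succPNat]
  set F : ℕ → ℝ := fun n => 1 / (a * (((n : ℝ) + 1) * a + b)) with hF
  have hden : ∀ n : ℕ, 0 < ((n : ℝ) + 1) * a + b := by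
    intro n
    have : (0 : ℝ) < ((n : ℝ) + 1) * a := by positivity
    linarith
  have hfn : ∀ n : ℕ,
      (fun k : ℕ+ => 1 / (((k : ℝ) * a + b) * (((k : ℝ) * a + b) + a)))
        (Equiv.pnatEquivNat.symm n) = F n - F (n + 1) := by
    intro n
    simp only [hcoe, hF]
    push_cast
    rw [div_sub_div _ _ (by positivity) (by positivity)]
    have h1 : 0 < ((n : ℝ) + 1) * a + b := hden n
    have h2 : 0 < ((n : ℝ) + 1 + 1) * a + b := by
      have := hden (n + 1); push_cast at this; linarith
    rw [div_eq_div_iff (by positivity) (by positivity)]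
    ring
  have hFanti : ∀ n : ℕ, F (n + 1) ≤ F n := by
    intro n
    rw [hF]
    simp only
    apply one_div_le_one_div_of_le
    · have := hden n; positivity
    · apply mul_le_mul_of_nonneg_left _ ha0.le
      push_cast
      nlinarith [ha0]
  have hnonneg : ∀ n : ℕ,
      0 ≤ (fun k : ℕ+ => 1 / (((k : ℝ) * a + b) * (((k : ℝ) * a + b) + a)))
        (Equiv.pnatEquivNat.symm n) := by
    intro n
    rw [hfn n]
    have := hFanti n
    linarith
  rw [show ((fun k : ℕ+ => 1 / (((k : ℝ) * a + b) * (((k : ℝ) * a + b) + a))) ∘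
    ⇑Equiv.pnatEquivNat.symm) = fun n : ℕ =>
      (fun k : ℕ+ => 1 / (((k : ℝ) * a + b) * (((k : ℝ) * a + b) + a)))
        (Equiv.pnatEquivNat.symm n) from rfl]
  rw [hasSum_iff_tendsto_nat_of_nonneg hnonneg]
  have hsum : ∀ n : ℕ, ∑ i ∈ Finset.range n,
      (fun k : ℕ+ => 1 / (((k : ℝ) * a + b) * (((k : ℝ) * a + b) + a)))
        (Equiv.pnatEquivNat.symm i) = F 0 - F n := by
    intro n
    rw [Finset.sum_congr rfl (fun i _ => hfn i), Finset.sum_range_sub' F n]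
  simp only [hsum]
  have hF0 : F 0 = 1 / (a * (a + b)) := by simp [hF]
  have hFlim : Filter.Tendsto F Filter.atTop (nhds 0) := by
    apply squeeze_zero (fun n => by positivity) (g := fun n : ℕ => 1 / ((n : ℝ) + 1))
    · intro n
      rw [hF]
      apply one_div_le_one_div_of_le (by positivity)
      have h1 : ((n : ℝ) + 1) ≤ ((n : ℝ) + 1) * a := le_mul_of_one_le_right (by positivity) ha
      nlinarith [hden n]
    · exact tendsto_one_div_add_atTop_nhds_zero_nat
  rw [← hF0]
  simpa using (tendsto_const_nhds (x := F 0)).sub hFlim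

open scoped NNReal ENNReal

/-- The interval-length weight, as a nonnegative real. -/
noncomputable def Gw (N : ℕ) (t : Fin N → ℕ+) : ℝ≥0 :=
  1 / ((cfQ (tupleExt t) (N + 1) : ℝ≥0) *
    ((cfQ (tupleExt t) (N + 1) : ℝ≥0) + (cfQ (tupleExt t) N : ℝ≥0)))

lemma Gw_coe (N : ℕ) (t : Fin N → ℕ+) : (Gw N t : ℝ) =
    1 / ((cfQ (tupleExt t) (N + 1) : ℝ) *
      ((cfQ (tupleExt t) (N + 1) : ℝ) + (cfQ (tupleExt t) N : ℝ))) := by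
  unfold Gw
  push_cast
  ring

/-- Inner telescoping: summing the weight over the last partial quotient. -/
lemma Gw_hasSum_inner (N : ℕ) (s : Fin N → ℕ+) :
    HasSum (fun k : ℕ+ => Gw (N + 1) (Fin.snoc s k)) (Gw N s) := by
  set q : ℕ := cfQ (tupleExt s) (N + 1) with hq
  set q' : ℕ := cfQ (tupleExt s) N with hq'
  have hq1 : 1 ≤ q := cfQ_tupleExt_pos s N
  rw [← NNReal.hasSum_coe]
  have key : ∀ k : ℕ+, (Gw (N + 1) (Fin.snoc s k) : ℝ) =
      1 / (((k : ℝ) * q + q') * (((k : ℝ) * q + q') + q)) := by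
    intro k
    rw [Gw_coe]
    have h2 : cfQ (tupleExt (Fin.snoc s k : Fin (N + 1) → ℕ+)) (N + 2)
        = (k : ℕ) * q + q' := by
      show tupleExt (Fin.snoc s k : Fin (N + 1) → ℕ+) (N + 1) *
        cfQ (tupleExt (Fin.snoc s k : Fin (N + 1) → ℕ+)) (N + 1) +
        cfQ (tupleExt (Fin.snoc s k : Fin (N + 1) → ℕ+)) N = (k : ℕ) * q + q'
      rw [tupleExt_snoc_last, cfQ_snoc_eq s k (le_refl (N + 1)),
        cfQ_snoc_eq s k (by omega), hq, hq']
    have h1 : cfQ (tupleExt (Fin.snoc s k : Fin (N + 1) → ℕ+)) (N + 1) = q :=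
      cfQ_snoc_eq s k (le_refl (N + 1))
    rw [h2, h1]
    push_cast
    ring_nf
  rw [funext key, Gw_coe, ← hq, ← hq']
  have := telescope (q : ℝ) (q' : ℝ) (by exact_mod_cast hq1) (by positivity)
  convert this using 2

/-- The key identity: the total weight over all `N`-tuples is `1`. -/
lemma Gw_tsum_eq_one (N : ℕ) : ∑' t : Fin N → ℕ+, (Gw N t : ℝ≥0∞) = 1 := by
  induction N with
  | zero =>
    have : ∀ t : Fin 0 → ℕ+, (Gw 0 t : ℝ≥0∞) = 1 := by
      intro t
      unfold Gw
      norm_num [cfQ]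
    rw [tsum_congr this]
    rw [tsum_eq_single (default : Fin 0 → ℕ+)
      (fun b hb => absurd (Subsingleton.elim b default) hb)]
  | succ N ih =>
    rw [← (Fin.snocEquiv (fun _ => ℕ+)).tsum_eq (fun t => (Gw (N + 1) t : ℝ≥0∞))]
    have heq : ∀ p : ℕ+ × (Fin N → ℕ+),
        (Gw (N + 1) (Fin.snocEquiv (fun _ => ℕ+) p) : ℝ≥0∞)
          = (Gw (N + 1) (Fin.snoc p.2 p.1) : ℝ≥0∞) := fun p => rfl
    rw [tsum_congr heq, ENNReal.tsum_prod', ENNReal.tsum_comm]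
    have hinner : ∀ s : Fin N → ℕ+,
        ∑' k : ℕ+, (Gw (N + 1) (Fin.snoc s k) : ℝ≥0∞) = (Gw N s : ℝ≥0∞) :=
      fun s => ENNReal.tsum_coe_eq (Gw_hasSum_inner N s)
    rw [tsum_congr hinner, ih]

lemma Gw_summable (N : ℕ) : Summable (Gw N) :=
  ENNReal.tsum_coe_ne_top_iff_summable.mp (by rw [Gw_tsum_eq_one]; exact ENNReal.one_ne_top)

lemma Gw_tsum (N : ℕ) : ∑' t : Fin N → ℕ+, Gw N t = 1 := by
  have h := Gw_tsum_eq_one N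
  rw [← ENNReal.coe_tsum (Gw_summable N)] at h
  exact_mod_cast h

/-- For every `N ≥ 1`, the sum over all tuples `(k_1,…,k_N)` of positive integers of
`1/q_N(k_1,…,k_N)²` converges and is strictly less than `2`. -/
theorem stmt7 (N : ℕ) (hN : 1 ≤ N) :
    Summable (fun t : Fin N → ℕ+ => (1 : ℝ) / (cfQ (tupleExt t) (N + 1) : ℝ) ^ 2) ∧
    ∑' t : Fin N → ℕ+, (1 : ℝ) / (cfQ (tupleExt t) (N + 1) : ℝ) ^ 2 < 2 := by
  have hgsum : Summable (fun t : Fin N → ℕ+ => 2 * (Gw N t : ℝ)) :=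
    (NNReal.summable_coe.mpr (Gw_summable N)).mul_left 2
  have hfg : ∀ t : Fin N → ℕ+,
      (1 : ℝ) / (cfQ (tupleExt t) (N + 1) : ℝ) ^ 2 ≤ 2 * (Gw N t : ℝ) := by
    intro t
    have hQ : (1 : ℝ) ≤ (cfQ (tupleExt t) (N + 1) : ℝ) := by
      exact_mod_cast cfQ_tupleExt_pos t N
    have hQ' : (cfQ (tupleExt t) N : ℝ) ≤ (cfQ (tupleExt t) (N + 1) : ℝ) := by
      exact_mod_cast cfQ_tupleExt_mono t N
    have hQ'0 : (0 : ℝ) ≤ (cfQ (tupleExt t) N : ℝ) := by positivity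
    rw [Gw_coe, mul_one_div, div_le_div_iff₀ (by positivity) (by positivity)]
    nlinarith
  have hfnonneg : ∀ t : Fin N → ℕ+,
      0 ≤ (1 : ℝ) / (cfQ (tupleExt t) (N + 1) : ℝ) ^ 2 := fun t => by positivity
  have hfsum : Summable (fun t : Fin N → ℕ+ =>
      (1 : ℝ) / (cfQ (tupleExt t) (N + 1) : ℝ) ^ 2) :=
    Summable.of_nonneg_of_le hfnonneg hfg hgsum
  refine ⟨hfsum, ?_⟩
  have hgt : ∑' t : Fin N → ℕ+, 2 * (Gw N t : ℝ) = 2 := by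
    rw [tsum_mul_left, ← NNReal.coe_tsum, Gw_tsum]
    norm_num
  have hlt : ∑' t : Fin N → ℕ+, (1 : ℝ) / (cfQ (tupleExt t) (N + 1) : ℝ) ^ 2 <
      ∑' t : Fin N → ℕ+, 2 * (Gw N t : ℝ) := by
    set t₀ : Fin N → ℕ+ := fun _ => 2 with ht₀
    apply Summable.tsum_lt_tsum (i := t₀) hfg _ hfsum hgsum
    have hq1 : 1 ≤ cfQ (tupleExt t₀) N := by
      obtain ⟨m, rfl⟩ : ∃ m, N = m + 1 := ⟨N - 1, by omega⟩
      exact cfQ_tupleExt_pos t₀ m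
    have hstrict : cfQ (tupleExt t₀) N < cfQ (tupleExt t₀) (N + 1) := by
      obtain ⟨m, rfl⟩ : ∃ m, N = m + 1 := ⟨N - 1, by omega⟩
      have h : cfQ (tupleExt t₀) (m + 1 + 1) =
          tupleExt t₀ (m + 1) * cfQ (tupleExt t₀) (m + 1) + cfQ (tupleExt t₀) m := rfl
      have hk : tupleExt t₀ (m + 1) = 2 := by
        unfold tupleExt
        rw [dif_pos (show m + 1 - 1 < m + 1 by omega)]
        rfl
      rw [hk] at h
      have := cfQ_tupleExt_pos t₀ m
      omega
    have hq1' : 1 ≤ cfQ (tupleExt t₀) (N + 1) := cfQ_tupleExt_pos t₀ N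
    have hQ : (1 : ℝ) ≤ (cfQ (tupleExt t₀) (N + 1) : ℝ) := by exact_mod_cast hq1'
    have hQ' : (cfQ (tupleExt t₀) N : ℝ) < (cfQ (tupleExt t₀) (N + 1) : ℝ) := by
      exact_mod_cast hstrict
    have hQ'0 : (1 : ℝ) ≤ (cfQ (tupleExt t₀) N : ℝ) := by exact_mod_cast hq1
    rw [Gw_coe, mul_one_div, div_lt_div_iff₀ (by positivity) (by positivity)]
    nlinarith
  rw [hgt] at hlt
  exact hlt
end

section
/- Let (f_D)_{D≥1} be a strictly increasing sequence of positive reals whose difference sequence (f_{D+1} − f_D)_{D≥1} is strictly decreasing and positive. Then for every positive integer X and every interval [a,b] ⊆ [0,1]: |#{1 ≤ D ≤ X : f_D mod 1 ∈ [a,b]} − (b−a)·X| < (3π+1)·X^{1/2}·f_{X+1}^{1/2} + (π/2)·1/(f_{X+2} − f_{X+1}). -/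
/-!
With `Φ x = Int.fract x * (Int.fract x - 1) / 2` one has
`∫_u^v Int.fract = (v - u)/2 + Φ v - Φ u`; for `u = F n - c`, `v = F (n+1) - c` this gives
`Int.fract (F n - c) = 1/2 - gₙ/2 + (Φ v - Φ u)/gₙ + eₙ` with the gap `gₙ = F (n+1) - F n` and
`0 ≤ eₙ ≤ ⌊v⌋ - ⌊u⌋`. Summing, the `eₙ` telescope to at most `F N - F 0 + 1`, and since the
gaps decrease and `Φ` takes values in `[-1/8, 0]`, Abel summation bounds `∑ (Φ v - Φ u)/gₙ` by
`1/(8 g_N)`. Writing the indicator of `[a, b]` as `(b - a) + fract (x - b) - fract (x - a)` plus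
the indicator of `fract x = b`, the discrepancy is at most `1/(4 g_N) + 2 F N + 2`. Together with
the trivial bound `N` and `N g_N ≤ F N`, whichever is better gives the stated estimate.
-/

open Finset

/-- The primitive of `t ↦ Int.fract t - 1/2` that vanishes at the integers. -/
noncomputable def sawtoothPrimitive (x : ℝ) : ℝ := Int.fract x * (Int.fract x - 1) / 2

lemma sawtoothPrimitive_mem_Icc (x : ℝ) : sawtoothPrimitive x ∈ Set.Icc (-1/8) 0 := by
  have h0 := Int.fract_nonneg x
  have h1 := Int.fract_lt_one x
  constructor <;> unfold sawtoothPrimitive <;> nlinarith [sq_nonneg (Int.fract x - 1/2)]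

/-- Comparing `(v - u) * Int.fract u` with `∫_u^v Int.fract`, the defect is
`k * (k - 1 + 2 * Int.fract v) / 2` for the number `k = ⌊v⌋ - ⌊u⌋` of jumps in between. -/
lemma fract_step_bounds {u v : ℝ} (huv : u < v) :
    1/2 - (v - u)/2 + (sawtoothPrimitive v - sawtoothPrimitive u) / (v - u) ≤ Int.fract u ∧
    Int.fract u ≤ 1/2 - (v - u)/2 + (sawtoothPrimitive v - sawtoothPrimitive u) / (v - u)
      + (⌊v⌋ - ⌊u⌋ : ℝ) := by
  have hd : 0 < v - u := sub_pos.mpr huv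
  have hk : (⌊v⌋ : ℝ) = ⌊u⌋ ∨ (⌊u⌋ : ℝ) + 1 ≤ ⌊v⌋ := by
    rcases (by have := Int.floor_mono huv.le; omega : ⌊v⌋ = ⌊u⌋ ∨ ⌊u⌋ + 1 ≤ ⌊v⌋) with h | h
    · exact Or.inl (by rw [h])
    · exact Or.inr (by exact_mod_cast h)
  set k : ℝ := ⌊v⌋ - ⌊u⌋
  have hjump : Int.fract u - (1/2 - (v - u)/2
      + (sawtoothPrimitive v - sawtoothPrimitive u) / (v - u))
      = k * (k - 1 + 2 * Int.fract v) / (2 * (v - u)) := by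
    simp only [k, sawtoothPrimitive, Int.fract]
    field_simp
    ring
  have hvu : v - u = k + Int.fract v - Int.fract u := by simp only [k, Int.fract]; ring
  have := Int.fract_nonneg u
  have := Int.fract_lt_one u
  have := Int.fract_nonneg v
  constructor
  · have : 0 ≤ k * (k - 1 + 2 * Int.fract v) / (2 * (v - u)) := by
      apply div_nonneg _ (by positivity)
      rcases hk with h | h
      · simp [k, h]
      · nlinarith
    linarith
  · have : k * (k - 1 + 2 * Int.fract v) / (2 * (v - u)) ≤ k := by
      rw [div_le_iff₀ (by positivity)]
      rcases hk with h | h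
      · simp [k, h]
      · nlinarith
    linarith

lemma abs_sum_mul_sub_le {w g : ℕ → ℝ} (hw : Monotone w) (hw0 : 0 ≤ w 0) {lo hi : ℝ}
    (hg : ∀ n, g n ∈ Set.Icc lo hi) (N : ℕ) :
    |∑ n ∈ range N, w n * (g (n + 1) - g n)| ≤ (hi - lo) * w N := by
  have hwN (n : ℕ) : 0 ≤ w n := hw0.trans (hw n.zero_le)
  -- Abel summation: subtracting the boundary term `w N * (g N - lo)` leaves a sum that only
  -- decreases, by at most `(hi - lo)` times the increments of `w`.
  have abel (N : ℕ) :
      -((hi - lo) * w N) ≤ ∑ n ∈ range N, w n * (g (n + 1) - g n) - w N * (g N - lo) ∧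
      ∑ n ∈ range N, w n * (g (n + 1) - g n) - w N * (g N - lo) ≤ 0 := by
    induction N with
    | zero =>
      obtain ⟨h1, h2⟩ := hg 0
      simp only [range_zero, sum_empty, zero_sub, neg_le_neg_iff, neg_nonpos]
      constructor <;> nlinarith
    | succ N ih =>
      obtain ⟨h1, h2⟩ := hg (N + 1)
      have := hw N.le_succ
      rw [sum_range_succ]
      constructor <;> nlinarith
  obtain ⟨h1, h2⟩ := hg N
  obtain ⟨h3, h4⟩ := abel N
  rw [abs_le]
  constructor <;> nlinarith [hwN N]

lemma sum_fract_sub_bounds {F : ℕ → ℝ} (hF : StrictMono F)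
    (hgap : Antitone fun n => F (n + 1) - F n) (c : ℝ) (N : ℕ) :
    -(1 / (8 * (F (N + 1) - F N)))
        ≤ ∑ n ∈ range N, Int.fract (F n - c) - (N / 2 - (F N - F 0) / 2) ∧
      ∑ n ∈ range N, Int.fract (F n - c) - (N / 2 - (F N - F 0) / 2)
        ≤ 1 / (8 * (F (N + 1) - F N)) + (F N - F 0 + 1) := by
  have hgap_pos (n : ℕ) : 0 < F (n + 1) - F n := sub_pos.mpr (hF n.lt_succ_self)
  set g : ℕ → ℝ := fun n => sawtoothPrimitive (F n - c)
  set S := ∑ n ∈ range N, (g (n + 1) - g n) / (F (n + 1) - F n)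
  have hS : |S| ≤ 1 / (8 * (F (N + 1) - F N)) := by
    have := abs_sum_mul_sub_le (w := fun n => 1 / (F (n + 1) - F n)) (g := g)
      (fun m n h => one_div_le_one_div_of_le (hgap_pos n) (hgap h))
      (one_div_pos.mpr (hgap_pos 0)).le (fun n => sawtoothPrimitive_mem_Icc _) N
    simp only [one_div_mul_eq_div] at this
    convert this using 1
    field_simp
    norm_num
  have hmain :
      ∑ n ∈ range N, (1 / 2 - (F (n + 1) - F n) / 2 + (g (n + 1) - g n) / (F (n + 1) - F n))
      = N / 2 - (F N - F 0) / 2 + S := by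
    rw [sum_add_distrib, sum_sub_distrib, sum_const, card_range, nsmul_eq_mul, ← sum_div,
      sum_range_sub]
    ring
  have hfloor : ∑ n ∈ range N, ((⌊F (n + 1) - c⌋ : ℝ) - ⌊F n - c⌋) ≤ F N - F 0 + 1 := by
    rw [sum_range_sub (fun n => (⌊F n - c⌋ : ℝ))]
    linarith [Int.floor_le (F N - c), Int.lt_floor_add_one (F 0 - c)]
  have step (n : ℕ) := fract_step_bounds (show F n - c < F (n + 1) - c by linarith [hgap_pos n])
  simp only [sub_sub_sub_cancel_right] at step
  have hlow := sum_le_sum fun n (_ : n ∈ range N) => (step n).1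
  have hup := sum_le_sum fun n (_ : n ∈ range N) => (step n).2
  rw [hmain] at hlow
  rw [sum_add_distrib, hmain] at hup
  rw [abs_le] at hS
  constructor <;> linarith

lemma fract_sub_eq_of_mem_Icc {x c : ℝ} (hc : c ∈ Set.Icc 0 1) :
    Int.fract (x - c) = Int.fract x - c + if Int.fract x < c then 1 else 0 := by
  have hx0 := Int.fract_nonneg x
  have hx1 := Int.fract_lt_one x
  obtain ⟨hc0, hc1⟩ := hc
  rw [show x - c = Int.fract x - c + ⌊x⌋ by rw [Int.fract]; ring, Int.fract_add_intCast]
  split_ifs with h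
  · rw [← Int.fract_add_one, Int.fract_eq_self.mpr ⟨by linarith, by linarith⟩]
  · rw [Int.fract_eq_self.mpr ⟨by linarith, by linarith⟩, add_zero]

lemma indicator_fract_mem_Icc (x : ℝ) {a b : ℝ} (ha : 0 ≤ a) (hab : a ≤ b) (hb : b ≤ 1) :
    (if Int.fract x ∈ Set.Icc a b then (1 : ℝ) else 0)
      = (b - a) + Int.fract (x - b) - Int.fract (x - a) + if Int.fract x = b then 1 else 0 := by
  rw [fract_sub_eq_of_mem_Icc ⟨ha.trans hab, hb⟩, fract_sub_eq_of_mem_Icc ⟨ha, hab.trans hb⟩]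
  simp only [Set.mem_Icc]
  split_ifs <;> grind

lemma card_filter_fract_eq_le {F : ℕ → ℝ} (hF : StrictMono F) (h0 : 0 ≤ F 0) (b : ℝ) (N : ℕ) :
    (#{n ∈ range N | Int.fract (F n) = b} : ℝ) ≤ F N + 1 := by
  have hnonneg (n : ℕ) : 0 ≤ F n := h0.trans (hF.monotone n.zero_le)
  have hcard : #{n ∈ range N | Int.fract (F n) = b} ≤ #(range (⌊F N⌋₊ + 1)) := by
    refine card_le_card_of_injOn (fun n => ⌊F n⌋₊) (fun n hn => ?_) (fun n hn m hm hnm => ?_)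
    · simp only [coe_filter, coe_range, mem_range, Set.mem_Iio, Set.mem_ofPred_eq] at hn ⊢
      exact Nat.lt_succ_of_le (Nat.floor_mono (hF.monotone hn.1.le))
    · simp only [coe_filter, mem_range, Set.mem_ofPred_eq] at hn hm hnm
      apply hF.injective
      have hfloor : (⌊F n⌋ : ℝ) = ⌊F m⌋ := by
        rw [← Int.natCast_floor_eq_floor (hnonneg n), ← Int.natCast_floor_eq_floor (hnonneg m), hnm]
      rw [← Int.floor_add_fract (F n), ← Int.floor_add_fract (F m), hfloor, hn.2, hm.2]
  calc (#{n ∈ range N | Int.fract (F n) = b} : ℝ) ≤ ⌊F N⌋₊ + 1 := by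
        exact_mod_cast hcard.trans (card_range _).le
    _ ≤ F N + 1 := by linarith [Nat.floor_le (hnonneg N)]

/-- If `X ≤ 100 Y` the trivial bound wins as `3π + 1 > 10`; otherwise `1/d ≥ X/Y > 100`
absorbs the constants. -/
lemma abs_lt_pi_sqrt_bound_of_le {E X Y d : ℝ} (hX : 0 ≤ X) (hY : 0 < Y) (hd : 0 < d)
    (hXY : X * d ≤ Y) (h₁ : |E| ≤ X) (h₂ : |E| ≤ 1 / (4 * d) + 2 * Y + 2) :
    |E| < (3 * Real.pi + 1) * √X * √Y + Real.pi / 2 * (1 / d) := by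
  have hpi := Real.pi_gt_three
  set w := 1 / d with hw_def
  have hw : 0 < w := by positivity
  have hXw : X ≤ Y * w := by rw [hw_def, mul_one_div, le_div_iff₀ hd]; exact hXY
  have h₂' : |E| ≤ w / 4 + 2 * Y + 2 := by rwa [hw_def, div_div, mul_comm]
  set s := √X * √Y with hs_def
  have hs : 0 ≤ s := by positivity
  have hs2 : s ^ 2 = X * Y := by rw [hs_def, mul_pow, Real.sq_sqrt hX, Real.sq_sqrt hY.le]
  rw [mul_assoc]
  rcases le_or_gt X (100 * Y) with hsmall | hlarge
  · have : X ≤ 10 * s := by nlinarith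
    nlinarith
  · have hw100 : 100 < w := by nlinarith
    have hYs : 10 * Y < s := by nlinarith
    nlinarith

lemma nat_mul_gap_le_sub {F : ℕ → ℝ} (hgap : Antitone fun n => F (n + 1) - F n) (N : ℕ) :
    N * (F (N + 1) - F N) ≤ F N - F 0 := by
  have := card_nsmul_le_sum (range N) (fun n => F (n + 1) - F n) (F (N + 1) - F N)
    fun n hn => hgap (mem_range.mp hn).le
  rwa [sum_range_sub, card_range, nsmul_eq_mul] at this

lemma abs_card_filter_sub_mul_le {α : Type*} (s : Finset α) (p : α → Prop) [DecidablePred p]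
    {θ : ℝ} (h₀ : 0 ≤ θ) (h₁ : θ ≤ 1) : |(#{x ∈ s | p x} : ℝ) - θ * #s| ≤ #s := by
  have : (#{x ∈ s | p x} : ℝ) ≤ #s := by exact_mod_cast card_filter_le s p
  rw [abs_le]
  constructor <;> nlinarith [(#{x ∈ s | p x}).cast_nonneg (α := ℝ)]

lemma ncard_sep_Icc_one_eq_card_filter_range (P : ℕ → Prop) [DecidablePred P] (X : ℕ) :
    {D : ℕ | 1 ≤ D ∧ D ≤ X ∧ P D}.ncard = #{n ∈ range X | P (n + 1)} := by
  rw [← card_map (addRightEmbedding 1), ← Set.ncard_coe_finset]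
  congr 1
  ext D
  simp only [Set.mem_ofPred_eq, coe_map, coe_filter, mem_range, Set.mem_image,
    addRightEmbedding_apply]
  constructor
  · rintro ⟨h1, h2, hP⟩
    exact ⟨D - 1, ⟨by omega, by rwa [Nat.sub_add_cancel h1]⟩, by omega⟩
  · rintro ⟨n, ⟨hn, hP⟩, rfl⟩
    exact ⟨by omega, by omega, hP⟩

lemma abs_card_fract_mem_Icc_sub_le {F : ℕ → ℝ} (hF : StrictMono F)
    (hgap : Antitone fun n => F (n + 1) - F n) (h0 : 0 ≤ F 0) {a b : ℝ} (ha : 0 ≤ a)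
    (hab : a ≤ b) (hb : b ≤ 1) (N : ℕ) :
    |(#{n ∈ range N | Int.fract (F n) ∈ Set.Icc a b} : ℝ) - (b - a) * N|
      ≤ 1 / (4 * (F (N + 1) - F N)) + 2 * F N + 2 := by
  have hcount : (#{n ∈ range N | Int.fract (F n) ∈ Set.Icc a b} : ℝ)
      = (b - a) * N + ∑ n ∈ range N, Int.fract (F n - b) - ∑ n ∈ range N, Int.fract (F n - a)
        + #{n ∈ range N | Int.fract (F n) = b} := by
    rw [natCast_card_filter, natCast_card_filter,
      sum_congr rfl fun n _ => indicator_fract_mem_Icc (F n) ha hab hb, sum_add_distrib,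
      sum_sub_distrib, sum_add_distrib, sum_const, card_range, nsmul_eq_mul]
    ring
  obtain ⟨ha_low, ha_up⟩ := sum_fract_sub_bounds hF hgap a N
  obtain ⟨hb_low, hb_up⟩ := sum_fract_sub_bounds hF hgap b N
  have hend := card_filter_fract_eq_le hF h0 b N
  have hmono : F 0 ≤ F N := hF.monotone N.zero_le
  have hquarter : 1 / (4 * (F (N + 1) - F N)) = 2 * (1 / (8 * (F (N + 1) - F N))) := by
    field_simp; norm_num
  rw [hcount, abs_le, hquarter]
  constructor <;> linarith [(#{n ∈ range N | Int.fract (F n) = b}).cast_nonneg (α := ℝ)]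

theorem stmt8_general
    -- `(f_D)_{D ≥ 1}` is a strictly increasing sequence of positive reals
    (f : ℕ → ℝ)
    (hfpos : ∀ D, 1 ≤ D → 0 < f D)
    (hfmono : ∀ D, 1 ≤ D → f D < f (D + 1))
    -- whose difference sequence is strictly decreasing (and positive):
    (hfdec : ∀ D, 1 ≤ D → f (D + 2) - f (D + 1) < f (D + 1) - f D)
    (X : ℕ) (a b : ℝ) (h0a : 0 ≤ a) (hab : a ≤ b) (hb1 : b ≤ 1) :
    |({D : ℕ | 1 ≤ D ∧ D ≤ X ∧ Int.fract (f D) ∈ Set.Icc a b}.ncard : ℝ) - (b - a) * (X : ℝ)|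
      < (3 * Real.pi + 1) * (X : ℝ) ^ ((1 : ℝ) / 2) * (f (X + 1)) ^ ((1 : ℝ) / 2)
        + (Real.pi / 2) * (1 / (f (X + 2) - f (X + 1))) := by
  set F : ℕ → ℝ := fun n => f (n + 1)
  have hF : StrictMono F := strictMono_nat_of_lt_succ fun n => hfmono (n + 1) (by omega)
  have hgap : Antitone fun n => F (n + 1) - F n :=
    antitone_nat_of_succ_le fun n => (hfdec (n + 1) (by omega)).le
  have hF0 : 0 < F 0 := hfpos 1 le_rfl
  have hgrowth : (X : ℝ) * (F (X + 1) - F X) ≤ F X := by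
    linarith [nat_mul_gap_le_sub hgap X]
  have htrivial := abs_card_filter_sub_mul_le (range X) (fun n => Int.fract (F n) ∈ Set.Icc a b)
    (sub_nonneg.mpr hab) (by linarith)
  rw [card_range] at htrivial
  rw [ncard_sep_Icc_one_eq_card_filter_range, ← Real.sqrt_eq_rpow, ← Real.sqrt_eq_rpow]
  exact abs_lt_pi_sqrt_bound_of_le X.cast_nonneg (hfpos (X + 1) (by omega))
    (sub_pos.mpr (hF X.lt_succ_self)) hgrowth htrivial
    (abs_card_fract_mem_Icc_sub_le hF hgap hF0.le h0a hab hb1 X)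

theorem stmt8
    -- `(f_D)_{D ≥ 1}` is a strictly increasing sequence of positive reals
    (f : ℕ → ℝ)
    (hfpos : ∀ D, 1 ≤ D → 0 < f D)
    (hfmono : ∀ D, 1 ≤ D → f D < f (D + 1))
    -- whose difference sequence is strictly decreasing (and positive):
    (hfdec : ∀ D, 1 ≤ D → f (D + 2) - f (D + 1) < f (D + 1) - f D)
    (X : ℕ) (hX : 1 ≤ X) (a b : ℝ) (h0a : 0 ≤ a) (hab : a ≤ b) (hb1 : b ≤ 1) :
    |({D : ℕ | 1 ≤ D ∧ D ≤ X ∧ Int.fract (f D) ∈ Set.Icc a b}.ncard : ℝ) - (b - a) * (X : ℝ)|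
      < (3 * Real.pi + 1) * (X : ℝ) ^ ((1 : ℝ) / 2) * (f (X + 1)) ^ ((1 : ℝ) / 2)
        + (Real.pi / 2) * (1 / (f (X + 2) - f (X + 1))) :=
  stmt8_general f hfpos hfmono hfdec X a b h0a hab hb1
end

section
/- Let (f_D)_{D≥1} be a strictly increasing sequence of positive reals whose difference sequence (f_{D+1} − f_D)_{D≥1} is strictly decreasing and positive. Then for all positive integers X and k: |Σ_{D=1}^{X} e^{2πi k f_D}| < π·k·f_{X+1} + 1/(π·k·(f_{X+2} − f_{X+1})). -/
/-!
Put `g D = k * f D` and `w D = g (D + 1) - g D`, so that the `w D` are positive and decreasing.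
The terms with `w D ≥ 1/2` are bounded trivially by `1 ≤ 2 * w D`, which telescopes. From the
first index `M` with `w M < 1/2` on, the Kusmin–Landau argument applies: writing
`e (g D) = c D * (e (g (D + 1)) - e (g D))` with `c D = (e (w D) - 1)⁻¹ = -1/2 - (i/2) cot (π w D)`,
Abel summation bounds the sum by `‖c M‖ + ‖c N‖ + ∑ ‖c (D + 1) - c D‖`, and the last sum
telescopes since `cot` is decreasing. The two boundary terms are `tan (π w M / 2) / 2 ≤ 2 * w M`
and `cot (π w N / 2) / 2 ≤ 1 / (π w N)`.
-/

open Real Finset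

theorem norm_sum_sub_mul_le_of_eq_mul_sub {R : Type*} [NormedRing R] {z c : ℕ → R} {M N : ℕ}
    (hz : ∀ D, ‖z D‖ ≤ 1) (hzc : ∀ D ∈ Icc M N, z D = c D * (z (D + 1) - z D)) (hMN : M ≤ N) :
    ‖∑ D ∈ Icc M N, z D - c N * z (N + 1)‖ ≤ ‖c M‖ + ∑ D ∈ Ico M N, ‖c (D + 1) - c D‖ := by
  have hcz (a : R) (D : ℕ) : ‖a * z D‖ ≤ ‖a‖ := by
    simpa using norm_mul_le_of_le (le_refl ‖a‖) (hz D)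
  have hstep : ∀ D ∈ Icc M N, z D - c D * z (D + 1) = -(c D * z D) := fun D hD => by
    calc z D - c D * z (D + 1) = c D * (z (D + 1) - z D) - c D * z (D + 1) := by rw [← hzc D hD]
      _ = -(c D * z D) := by noncomm_ring
  clear hzc
  induction N, hMN using Nat.le_induction with
  | base =>
    rw [Icc_self, sum_singleton, Ico_self, sum_empty, add_zero, hstep M (by simp), norm_neg]
    exact hcz _ _
  | succ n hMn ih =>
    have hsplit : ∑ D ∈ Icc M (n + 1), z D - c (n + 1) * z (n + 1 + 1)
        = (∑ D ∈ Icc M n, z D - c n * z (n + 1)) - (c (n + 1) - c n) * z (n + 1) := by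
      rw [sum_Icc_succ_top (by omega), add_sub_assoc, hstep (n + 1) (by simp; omega)]
      noncomm_ring
    rw [hsplit, sum_Ico_succ_top hMn, ← add_assoc]
    have hstep' : ∀ D ∈ Icc M n, z D - c D * z (D + 1) = -(c D * z D) := fun D hD =>
      hstep D (Icc_subset_Icc_right (by omega) hD)
    exact (norm_sub_le _ _).trans (add_le_add (ih hstep') (hcz _ _))

theorem norm_sum_le_of_eq_mul_sub {R : Type*} [NormedRing R] {z c : ℕ → R} {M N : ℕ}
    (hz : ∀ D, ‖z D‖ ≤ 1) (hzc : ∀ D ∈ Icc M N, z D = c D * (z (D + 1) - z D)) (hMN : M ≤ N) :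
    ‖∑ D ∈ Icc M N, z D‖ ≤ ‖c M‖ + ‖c N‖ + ∑ D ∈ Ico M N, ‖c (D + 1) - c D‖ :=
  calc ‖∑ D ∈ Icc M N, z D‖
      ≤ ‖∑ D ∈ Icc M N, z D - c N * z (N + 1)‖ + ‖c N * z (N + 1)‖ := norm_le_norm_sub_add _ _
    _ ≤ (‖c M‖ + ∑ D ∈ Ico M N, ‖c (D + 1) - c D‖) + ‖c N‖ :=
        add_le_add (norm_sum_sub_mul_le_of_eq_mul_sub hz hzc hMN)
          (by simpa using norm_mul_le_of_le (le_refl ‖c N‖) (hz (N + 1)))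
    _ = _ := by ring

lemma Real.cot_antitoneOn : AntitoneOn cot (Set.Ioo 0 π) := by
  rintro x ⟨hx0, hxπ⟩ y ⟨hy0, hyπ⟩ hxy
  have hsx : 0 < sin x := sin_pos_of_pos_of_lt_pi hx0 hxπ
  have hsy : 0 < sin y := sin_pos_of_pos_of_lt_pi hy0 hyπ
  have hsub : 0 ≤ sin (y - x) := sin_nonneg_of_nonneg_of_le_pi (by linarith) (by linarith)
  rw [cot_eq_cos_div_sin, cot_eq_cos_div_sin, div_le_div_iff₀ hsy hsx]
  rw [sin_sub] at hsub
  linarith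

lemma one_sub_cos_div_two_sin_le {a : ℝ} (ha : 0 < a) (ha' : a ≤ π / 2) :
    (1 - cos a) / (2 * sin a) ≤ π * a / 8 := by
  have hsin : 2 / π * a ≤ sin a := mul_le_sin ha.le ha'
  have hcos : 1 - a ^ 2 / 2 ≤ cos a := one_sub_sq_div_two_le_cos
  have hsin0 : 0 < sin a := lt_of_lt_of_le (by positivity) hsin
  rw [div_le_iff₀ (by positivity)]
  have key : π * a / 4 * (2 / π * a) = a ^ 2 / 2 := by field_simp; ring
  nlinarith [mul_le_mul_of_nonneg_left hsin (by positivity : 0 ≤ π * a / 4)]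

lemma one_add_cos_div_two_sin_le {b : ℝ} (hb : 0 < b) (hb' : b < π) :
    (1 + cos b) / (2 * sin b) ≤ 1 / b := by
  obtain ⟨x, rfl⟩ : ∃ x, b = 2 * x := ⟨b / 2, by ring⟩
  have hsx : 0 < sin x := sin_pos_of_pos_of_lt_pi (by linarith) (by linarith)
  have hcx : 0 < cos x := cos_pos_of_mem_Ioo ⟨by linarith, by linarith⟩
  have htan : x ≤ sin x / cos x := tan_eq_sin_div_cos x ▸ le_tan (by linarith) (by linarith)
  rw [le_div_iff₀ hcx] at htan
  rw [sin_two_mul, cos_two_mul, div_le_div_iff₀ (by positivity) hb]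
  nlinarith

namespace KusminLandau

noncomputable def e (x : ℝ) : ℂ := Complex.exp (2 * π * Complex.I * x)

lemma e_eq_exp_I_mul (x : ℝ) : e x = Complex.exp (Complex.I * ((2 * π * x : ℝ) : ℂ)) := by
  rw [e]; push_cast; ring_nf

lemma norm_e (x : ℝ) : ‖e x‖ = 1 := by
  rw [e_eq_exp_I_mul, mul_comm]; exact Complex.norm_exp_ofReal_mul_I _

lemma e_add (x y : ℝ) : e (x + y) = e x * e y := by
  simp only [e, ← Complex.exp_add]; push_cast; ring_nf

lemma norm_e_sub_one (w : ℝ) : ‖e w - 1‖ = 2 * |sin (π * w)| := by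
  rw [e_eq_exp_I_mul, Complex.norm_exp_I_mul_ofReal_sub_one, norm_mul, Real.norm_eq_abs,
    Real.norm_eq_abs, abs_two]
  ring_nf

lemma e_sub_one_ne_zero {w : ℝ} (hw : sin (π * w) ≠ 0) : e w - 1 ≠ 0 := by
  rw [← norm_ne_zero_iff, norm_e_sub_one]; positivity

lemma norm_inv_e_sub_one {w : ℝ} (hw : 0 < sin (π * w)) :
    ‖(e w - 1)⁻¹‖ = 1 / (2 * sin (π * w)) := by
  rw [norm_inv, norm_e_sub_one, abs_of_pos hw, one_div]

lemma inv_e_sub_one_eq {w : ℝ} (hw : sin (π * w) ≠ 0) :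
    (e w - 1)⁻¹ = -1 / 2 - Complex.I / 2 * (cot (π * w) : ℂ) := by
  have he : Complex.exp (2 * Complex.I * ((π * w : ℝ) : ℂ)) = e w := by rw [e]; push_cast; ring_nf
  have hne : e w - 1 ≠ 0 := e_sub_one_ne_zero hw
  have hne' : 1 - e w ≠ 0 := by rw [← neg_sub]; exact neg_ne_zero.mpr hne
  rw [Complex.ofReal_cot, Complex.cot_eq_exp_ratio, he]
  field_simp
  ring_nf

lemma norm_inv_e_sub_one_sub {v w : ℝ} (hv : 0 < v) (hvw : v ≤ w) (hw : w < 1) :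
    ‖(e v - 1)⁻¹ - (e w - 1)⁻¹‖ = (cot (π * v) - cot (π * w)) / 2 := by
  have hsin : ∀ x, 0 < x → x < 1 → sin (π * x) ≠ 0 := fun x hx0 hx1 =>
    (sin_pos_of_pos_of_lt_pi (by positivity) (by nlinarith [pi_pos])).ne'
  have hcot : cot (π * w) ≤ cot (π * v) :=
    cot_antitoneOn ⟨by positivity, by nlinarith [pi_pos]⟩
      ⟨by nlinarith [pi_pos], by nlinarith [pi_pos]⟩ (by nlinarith [pi_pos])
  rw [inv_e_sub_one_eq (hsin v hv (by linarith)), inv_e_sub_one_eq (hsin w (by linarith) hw),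
    show -1 / 2 - Complex.I / 2 * (cot (π * v) : ℂ) - (-1 / 2 - Complex.I / 2 * (cot (π * w) : ℂ))
      = ((cot (π * v) - cot (π * w)) / 2 : ℝ) * (-Complex.I) by push_cast; ring,
    norm_mul, norm_neg, Complex.norm_I, mul_one, Complex.norm_real, Real.norm_eq_abs,
    abs_of_nonneg (by linarith)]

lemma e_eq_inv_e_sub_one_mul {w : ℝ} (hw : sin (π * w) ≠ 0) (x : ℝ) :
    e x = (e w - 1)⁻¹ * (e (x + w) - e x) := by
  rw [e_add, ← mul_sub_one, mul_comm, mul_assoc, mul_inv_cancel₀ (e_sub_one_ne_zero hw), mul_one]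

theorem norm_sum_e_le_kusmin_landau {g : ℕ → ℝ} {M N : ℕ} (hMN : M ≤ N)
    (hpos : ∀ D ∈ Icc M N, 0 < g (D + 1) - g D) (hlt : ∀ D ∈ Icc M N, g (D + 1) - g D < 1)
    (hanti : ∀ D ∈ Ico M N, g (D + 1 + 1) - g (D + 1) ≤ g (D + 1) - g D) :
    ‖∑ D ∈ Icc M N, e (g D)‖ ≤
      (1 - cos (π * (g (M + 1) - g M))) / (2 * sin (π * (g (M + 1) - g M))) +
      (1 + cos (π * (g (N + 1) - g N))) / (2 * sin (π * (g (N + 1) - g N))) := by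
  set w : ℕ → ℝ := fun D => g (D + 1) - g D with hw
  have hsin : ∀ D ∈ Icc M N, 0 < sin (π * w D) := fun D hD =>
    sin_pos_of_pos_of_lt_pi (mul_pos pi_pos (hpos D hD)) (by nlinarith [pi_pos, hlt D hD])
  have hMM : M ∈ Icc M N := left_mem_Icc.mpr hMN
  have hNN : N ∈ Icc M N := right_mem_Icc.mpr hMN
  have hzc : ∀ D ∈ Icc M N, e (g D) = (e (w D) - 1)⁻¹ * (e (g (D + 1)) - e (g D)) := fun D hD => by
    simpa [hw] using e_eq_inv_e_sub_one_mul (hsin D hD).ne' (g D)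
  have hdiff : ∀ D ∈ Ico M N, ‖(e (w (D + 1)) - 1)⁻¹ - (e (w D) - 1)⁻¹‖
      = cot (π * w (D + 1)) / 2 - cot (π * w D) / 2 := fun D hDo => by
    have hD : D ∈ Icc M N := Ico_subset_Icc_self hDo
    have hD1 : D + 1 ∈ Icc M N := by simp only [mem_Icc, mem_Ico] at hDo ⊢; omega
    rw [norm_inv_e_sub_one_sub (hpos _ hD1) (hanti D hDo) (hlt D hD), sub_div]
  calc ‖∑ D ∈ Icc M N, e (g D)‖
      ≤ ‖(e (w M) - 1)⁻¹‖ + ‖(e (w N) - 1)⁻¹‖ +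
          ∑ D ∈ Ico M N, ‖(e (w (D + 1)) - 1)⁻¹ - (e (w D) - 1)⁻¹‖ :=
        norm_sum_le_of_eq_mul_sub (fun D => (norm_e _).le) hzc hMN
    _ = 1 / (2 * sin (π * w M)) + 1 / (2 * sin (π * w N)) +
          (cot (π * w N) / 2 - cot (π * w M) / 2) := by
        rw [norm_inv_e_sub_one (hsin M hMM), norm_inv_e_sub_one (hsin N hNN), sum_congr rfl hdiff,
          sum_Ico_sub (fun D => cot (π * w D) / 2) hMN]
    _ = _ := by
        have hsM := (hsin M hMM).ne'
        have hsN := (hsin N hNN).ne'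
        simp only [hw] at hsM hsN ⊢
        rw [cot_eq_cos_div_sin, cot_eq_cos_div_sin]
        field_simp
        ring

theorem norm_sum_e_Ico_le {g : ℕ → ℝ} {a b : ℕ} (hab : a ≤ b)
    (hw : ∀ D ∈ Ico a b, 1 / 2 ≤ g (D + 1) - g D) :
    ‖∑ D ∈ Ico a b, e (g D)‖ ≤ 2 * (g b - g a) :=
  calc ‖∑ D ∈ Ico a b, e (g D)‖ ≤ ∑ D ∈ Ico a b, ‖e (g D)‖ := norm_sum_le _ _
    _ ≤ ∑ D ∈ Ico a b, 2 * (g (D + 1) - g D) :=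
        sum_le_sum fun D hD => by rw [norm_e]; linarith [hw D hD]
    _ = 2 * (g b - g a) := by rw [← mul_sum, sum_Ico_sub g hab]

theorem norm_sum_e_le {g : ℕ → ℝ} {a N : ℕ} (haN : a ≤ N)
    (hpos : ∀ D, a ≤ D → 0 < g (D + 1) - g D)
    (hanti : ∀ D, a ≤ D → g (D + 1 + 1) - g (D + 1) ≤ g (D + 1) - g D) :
    ‖∑ D ∈ Icc a N, e (g D)‖ ≤ 2 * (g (N + 1) - g a) + 1 / (π * (g (N + 1) - g N)) := by
  have hw_anti : AntitoneOn (fun D => g (D + 1) - g D) {x | a ≤ x} :=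
    antitoneOn_nat_Ici_of_succ_le hanti
  have hg_mono : MonotoneOn g {x | a ≤ x} :=
    monotoneOn_nat_Ici_of_le_succ fun D hD => (sub_pos.mp (hpos D hD)).le
  have htail_pos : 0 < 1 / (π * (g (N + 1) - g N)) := by
    have := hpos N haN; positivity
  rw [← Ico_add_one_right_eq_Icc]
  by_cases hsmall : ∃ M, a ≤ M ∧ M ≤ N ∧ g (M + 1) - g M < 1 / 2
  swap
  · push Not at hsmall
    calc _ ≤ 2 * (g (N + 1) - g a) :=
          norm_sum_e_Ico_le (by omega) fun D hD => hsmall D (mem_Ico.mp hD).1 (by grind)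
      _ ≤ _ := le_add_of_nonneg_right htail_pos.le
  classical
  obtain ⟨haM, hMN, hM⟩ := Nat.find_spec hsmall
  set M := Nat.find hsmall
  have hlarge : ∀ D ∈ Ico a M, 1 / 2 ≤ g (D + 1) - g D := fun D hD => by
    obtain ⟨haD, hDM⟩ := mem_Ico.mp hD
    have := Nat.find_min hsmall hDM
    push Not at this
    exact this haD (by omega)
  have hKL := norm_sum_e_le_kusmin_landau hMN (fun D hD => hpos D (by grind))
    (fun D hD => by linarith [hw_anti haM (by grind : a ≤ D) (mem_Icc.mp hD).1])
    (fun D _ => hanti D (by grind))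
  have hwM := hpos M haM
  have hwN := hpos N haN
  have hhead := one_sub_cos_div_two_sin_le (mul_pos pi_pos hwM) (by nlinarith [pi_pos])
  have htail := one_add_cos_div_two_sin_le (mul_pos pi_pos hwN)
    (by nlinarith [pi_pos, hw_anti haM haN hMN])
  have hgMN : g (M + 1) ≤ g (N + 1) := hg_mono (by grind) (by grind) (by omega)
  have hπ : π * π ≤ 16 := by nlinarith [pi_lt_four, pi_pos]
  rw [← sum_Ico_consecutive _ haM (by omega : M ≤ N + 1), Ico_add_one_right_eq_Icc]
  calc _ ≤ ‖∑ D ∈ Ico a M, e (g D)‖ + ‖∑ D ∈ Icc M N, e (g D)‖ := norm_add_le _ _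
    _ ≤ 2 * (g M - g a) + (π * (π * (g (M + 1) - g M)) / 8 + 1 / (π * (g (N + 1) - g N))) :=
        add_le_add (norm_sum_e_Ico_le haM hlarge) (hKL.trans (add_le_add hhead htail))
    _ ≤ _ := by nlinarith [mul_nonneg (sub_nonneg.mpr hπ) hwM.le]

end KusminLandau

theorem stmt10
    -- `(f_D)_{D ≥ 1}` is a strictly increasing sequence of positive reals
    (f : ℕ → ℝ)
    (hfpos : ∀ D, 1 ≤ D → 0 < f D)
    (hfmono : ∀ D, 1 ≤ D → f D < f (D + 1))
    -- whose difference sequence is strictly decreasing (and positive):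
    (hfdec : ∀ D, 1 ≤ D → f (D + 2) - f (D + 1) < f (D + 1) - f D)
    (X k : ℕ) (hX : 1 ≤ X) (hk : 1 ≤ k) :
    ‖∑ D ∈ Finset.Icc 1 X,
        Complex.exp (2 * Real.pi * Complex.I * (k : ℂ) * (f D : ℂ))‖
      < Real.pi * (k : ℝ) * f (X + 1)
        + 1 / (Real.pi * (k : ℝ) * (f (X + 2) - f (X + 1))) := by
  have hk0 : (0 : ℝ) < k := by exact_mod_cast hk
  have hsum : ∑ D ∈ Icc 1 X, Complex.exp (2 * π * Complex.I * (k : ℂ) * (f D : ℂ))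
      = ∑ D ∈ Icc 1 X, KusminLandau.e (k * f D) :=
    sum_congr rfl fun D _ => by rw [KusminLandau.e]; push_cast; ring_nf
  have hbound := KusminLandau.norm_sum_e_le (g := fun D => k * f D) hX
    (fun D hD => by simpa only [← mul_sub] using mul_pos hk0 (sub_pos.mpr (hfmono D hD)))
    (fun D hD => by simpa only [← mul_sub] using mul_le_mul_of_nonneg_left (hfdec D hD).le hk0.le)
  have hhead : 2 * (k * f (X + 1) - k * f 1) < π * k * f (X + 1) := by
    nlinarith [mul_pos hk0 (hfpos 1 le_rfl), mul_pos hk0 (hfpos (X + 1) (by omega)), pi_gt_three]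
  have htail : 1 / (π * (k * f (X + 1) - k * f X)) < 1 / (π * k * (f (X + 2) - f (X + 1))) := by
    have hδ := sub_pos.mpr (hfmono (X + 1) (by omega))
    refine one_div_lt_one_div_of_lt (by positivity) ?_
    nlinarith [mul_lt_mul_of_pos_left (hfdec X hX) (mul_pos pi_pos hk0)]
  rw [hsum]
  linarith
end

section
/- For all integers r ≥ 3 and n ≥ 3: Σ_{m=0}^{r−1} (r choose m)·(π^{m/2}/Γ(m/2+1))·n^{m/2} ≤ (r·π^{(r−1)/2}/Γ((r+1)/2))·n^{(r−1)/2} + e^{330}·(0.9)^{r}·n^{(r−2)/2}, where Γ denotes the gamma function. -/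
/-!
The summand `m = r - 1` is exactly the first term on the right, so only the terms with
`m ≤ r - 2` have to be bounded. Writing `π n = 48 π · (n / 3) / 16`, such a term is
`C(r, m) 2⁻ᵐ · (48 π)^{m/2} / Γ(m/2 + 1) · 2⁻ᵐ · (n / 3)^{m/2}`. By the binomial theorem
`C(r, m) 2⁻ᵐ ≤ (3/2)^r`; the tail `∫ₓ^∞ s^t e^{-s} ds ≥ x^t e^{-x}` of the Gamma integral gives
`(48 π)^{m/2} ≤ Γ(m/2 + 1) e^{48π}`; and `(n / 3)^{m/2} ≤ (n / 3)^{(r-2)/2}` as `n ≥ 3`.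
The factors `2⁻ᵐ` sum to at most `2`, while `(3/2)^r 3^{-(r-2)/2} = 3 (√3/2)^r ≤ 3 · 0.9^r`
and `6 e^{48π} ≤ e^{330}`.
-/

open Real MeasureTheory Set

theorem rpow_le_Gamma_add_one_mul_exp {x t : ℝ} (hx : 0 ≤ x) (ht : 0 ≤ t) :
    x ^ t ≤ Gamma (t + 1) * exp x := by
  have hint : IntegrableOn (fun s : ℝ => exp (-s) * s ^ t) (Ioi 0) := by
    simpa using GammaIntegral_convergent (s := t + 1) (by linarith)
  have htail : x ^ t * exp (-x) ≤ ∫ s in Ioi x, exp (-s) * s ^ t :=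
    calc x ^ t * exp (-x) = ∫ s in Ioi x, exp (-s) * x ^ t := by
          rw [integral_mul_const, integral_exp_neg_Ioi, mul_comm]
      _ ≤ ∫ s in Ioi x, exp (-s) * s ^ t :=
          setIntegral_mono_on ((integrableOn_exp_neg_Ioi x).mul_const _)
            (hint.mono_set (Ioi_subset_Ioi hx)) measurableSet_Ioi
            fun s hs => by gcongr; exact le_of_lt hs
  have hGamma : ∫ s in Ioi x, exp (-s) * s ^ t ≤ Gamma (t + 1) := by
    rw [Gamma_eq_integral (by linarith), add_sub_cancel_right]
    exact setIntegral_mono_set hint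
      (ae_restrict_of_forall_mem measurableSet_Ioi fun s hs => by
        have : (0:ℝ) < s := hs
        positivity)
      (Ioi_subset_Ioi hx).eventuallyLE
  calc x ^ t = x ^ t * exp (-x) * exp x := by rw [mul_assoc, ← exp_add]; simp
    _ ≤ Gamma (t + 1) * exp x := by gcongr; exact htail.trans hGamma

theorem choose_mul_pow_le_one_add_pow {u : ℝ} (hu : 0 ≤ u) (r m : ℕ) :
    (r.choose m : ℝ) * u ^ m ≤ (1 + u) ^ r := by
  rcases lt_or_ge r m with h | h
  · rw [Nat.choose_eq_zero_of_lt h, Nat.cast_zero, zero_mul]; positivity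
  calc (r.choose m : ℝ) * u ^ m = u ^ m * 1 ^ (r - m) * r.choose m := by ring
    _ ≤ ∑ k ∈ Finset.range (r + 1), u ^ k * 1 ^ (r - k) * r.choose k :=
        Finset.single_le_sum (f := fun k => u ^ k * 1 ^ (r - k) * (r.choose k : ℝ))
          (fun k _ => by positivity) (Finset.mem_range.2 (Nat.lt_succ_of_le h))
    _ = (1 + u) ^ r := by rw [← add_pow, add_comm]

theorem rpow_natCast_div_two {x : ℝ} (hx : 0 ≤ x) (m : ℕ) : x ^ ((m : ℝ) / 2) = √x ^ m := by
  rw [rpow_div_two_eq_sqrt _ hx, rpow_natCast]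

theorem choose_mul_ball_volume_mul_rpow_le {r m : ℕ} {x : ℝ} (hm : m + 2 ≤ r) (hx : 3 ≤ x) :
    (r.choose m : ℝ) * (π ^ ((m : ℝ) / 2) / Gamma ((m : ℝ) / 2 + 1)) * x ^ ((m : ℝ) / 2)
      ≤ (3 / 2) ^ r * exp (48 * π) * (x / 3) ^ (((r : ℝ) - 2) / 2) * (1 / 2) ^ m := by
  set t : ℝ := (m : ℝ) / 2
  have hG : 0 < Gamma (t + 1) := Gamma_pos_of_pos (by positivity)
  have hsplit : π ^ t * x ^ t = (48 * π) ^ t * (x / 3) ^ t * ((1 / 2) ^ m * (1 / 2) ^ m) := by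
    simp only [t, rpow_natCast_div_two (by positivity : (0:ℝ) ≤ 48 * π),
      rpow_natCast_div_two pi_pos.le, rpow_natCast_div_two (by positivity : (0:ℝ) ≤ x / 3),
      rpow_natCast_div_two (by positivity : (0:ℝ) ≤ x), ← mul_pow]
    congr 1
    rw [sqrt_mul (by norm_num), sqrt_div' _ (by norm_num)]
    have h48 : √48 = 4 * √3 := by
      rw [show (48:ℝ) = 4 ^ 2 * 3 by norm_num, sqrt_mul (by positivity), sqrt_sq (by norm_num)]
    have h3 : √3 ≠ 0 := by positivity
    rw [h48]; field_simp; ring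
  have hchoose : (r.choose m : ℝ) * (1 / 2) ^ m ≤ (3 / 2) ^ r := by
    have := choose_mul_pow_le_one_add_pow (u := 1 / 2) (by norm_num) r m
    norm_num at this ⊢; exact this
  have hgamma : (48 * π) ^ t / Gamma (t + 1) ≤ exp (48 * π) := by
    rw [div_le_iff₀ hG, mul_comm (exp _)]
    exact rpow_le_Gamma_add_one_mul_exp (by positivity) (by positivity)
  have hpow : (x / 3) ^ t ≤ (x / 3) ^ (((r : ℝ) - 2) / 2) := by
    apply rpow_le_rpow_of_exponent_le (by rw [le_div_iff₀ (by norm_num)]; linarith)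
    have : ((m + 2 : ℕ) : ℝ) ≤ r := by exact_mod_cast hm
    push_cast at this; simp only [t]; linarith
  calc (r.choose m : ℝ) * (π ^ t / Gamma (t + 1)) * x ^ t
      = ((r.choose m : ℝ) * (1 / 2) ^ m) * ((48 * π) ^ t / Gamma (t + 1))
          * (x / 3) ^ t * (1 / 2) ^ m := by
        rw [mul_div_assoc', mul_assoc, mul_div_right_comm, mul_assoc, hsplit]; ring
    _ ≤ (3 / 2) ^ r * exp (48 * π) * (x / 3) ^ (((r : ℝ) - 2) / 2) * (1 / 2) ^ m := by
        gcongr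

theorem three_halves_pow_mul_div_three_rpow_le (r : ℕ) {x : ℝ} (hx : 0 ≤ x) :
    (3 / 2) ^ r * (x / 3) ^ (((r : ℝ) - 2) / 2) ≤ 3 * 0.9 ^ r * x ^ (((r : ℝ) - 2) / 2) := by
  have h3 : (3 : ℝ) ^ (((r : ℝ) - 2) / 2) = √3 ^ r / 3 := by
    rw [sub_div, div_self two_ne_zero, rpow_sub_one three_ne_zero,
      rpow_div_two_eq_sqrt _ (by norm_num), rpow_natCast]
  have hhalf : (3 / 2 : ℝ) = √3 / 2 * √3 := by
    rw [div_mul_eq_mul_div, mul_self_sqrt (by norm_num)]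
  have hsqrt : √3 / 2 ≤ 0.9 := by
    rw [div_le_iff₀ two_pos, sqrt_le_left (by norm_num)]; norm_num
  rw [div_rpow hx (by norm_num), h3]
  calc (3 / 2) ^ r * (x ^ (((r : ℝ) - 2) / 2) / (√3 ^ r / 3))
      = 3 * (√3 / 2) ^ r * x ^ (((r : ℝ) - 2) / 2) := by
        rw [hhalf, mul_pow]; field_simp
    _ ≤ 3 * 0.9 ^ r * x ^ (((r : ℝ) - 2) / 2) := by gcongr

theorem sum_range_choose_ball_volume_mul_rpow_le (r : ℕ) {x : ℝ} (hx : 3 ≤ x) :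
    ∑ m ∈ Finset.range (r - 1),
        (r.choose m : ℝ) * (π ^ ((m : ℝ) / 2) / Gamma ((m : ℝ) / 2 + 1)) * x ^ ((m : ℝ) / 2)
      ≤ 6 * exp (48 * π) * 0.9 ^ r * x ^ (((r : ℝ) - 2) / 2) := by
  calc _ ≤ ∑ m ∈ Finset.range (r - 1),
          (3 / 2) ^ r * exp (48 * π) * (x / 3) ^ (((r : ℝ) - 2) / 2) * (1 / 2) ^ m :=
        Finset.sum_le_sum fun m hm =>
          choose_mul_ball_volume_mul_rpow_le (by rw [Finset.mem_range] at hm; omega) hx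
    _ = (3 / 2) ^ r * (x / 3) ^ (((r : ℝ) - 2) / 2)
          * (exp (48 * π) * ∑ m ∈ Finset.range (r - 1), (1 / 2 : ℝ) ^ m) := by
        rw [← Finset.mul_sum]; ring
    _ ≤ 3 * 0.9 ^ r * x ^ (((r : ℝ) - 2) / 2) * (exp (48 * π) * 2) := by
        refine mul_le_mul (three_halves_pow_mul_div_three_rpow_le r (by linarith)) ?_
          (by positivity) (by positivity)
        gcongr
        exact sum_geometric_two_le _
    _ = 6 * exp (48 * π) * 0.9 ^ r * x ^ (((r : ℝ) - 2) / 2) := by ring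

theorem six_mul_exp_mul_pi_le : 6 * exp (48 * π) ≤ exp 330 :=
  calc 6 * exp (48 * π) ≤ exp 6 * exp (48 * π) := by
        gcongr; linarith [add_one_le_exp (6 : ℝ)]
    _ ≤ exp 330 := by
        rw [← exp_add]; gcongr; linarith [pi_lt_four]

/-- For integers `r ≥ 3` and `n ≥ 3`:
`Σ_{m=0}^{r−1} (r choose m)·(π^{m/2}/Γ(m/2+1))·n^{m/2}
  ≤ (r·π^{(r−1)/2}/Γ((r+1)/2))·n^{(r−1)/2} + e^{330}·(0.9)^r·n^{(r−2)/2}`. -/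
theorem stmt16 (r n : ℕ) (hr : 3 ≤ r) (hn : 3 ≤ n) :
    ∑ m ∈ Finset.range r,
        (r.choose m : ℝ) * (Real.pi ^ ((m : ℝ) / 2) / Real.Gamma ((m : ℝ) / 2 + 1))
          * (n : ℝ) ^ ((m : ℝ) / 2)
      ≤ (r : ℝ) * Real.pi ^ (((r : ℝ) - 1) / 2) / Real.Gamma (((r : ℝ) + 1) / 2)
          * (n : ℝ) ^ (((r : ℝ) - 1) / 2)
        + Real.exp 330 * (0.9 : ℝ) ^ r * (n : ℝ) ^ (((r : ℝ) - 2) / 2) := by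
  obtain ⟨s, rfl⟩ : ∃ s, r = s + 1 := ⟨r - 1, by omega⟩
  have hn' : (3 : ℝ) ≤ n := by exact_mod_cast hn
  have htop : ((s + 1).choose s : ℝ) * (π ^ ((s : ℝ) / 2) / Gamma ((s : ℝ) / 2 + 1))
        * (n : ℝ) ^ ((s : ℝ) / 2)
      = ((s + 1 : ℕ) : ℝ) * π ^ ((((s + 1 : ℕ) : ℝ) - 1) / 2)
          / Gamma ((((s + 1 : ℕ) : ℝ) + 1) / 2) * (n : ℝ) ^ ((((s + 1 : ℕ) : ℝ) - 1) / 2) := by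
    rw [Nat.choose_succ_self_right]; push_cast; ring_nf
  have hrest := sum_range_choose_ball_volume_mul_rpow_le (s + 1) hn'
  rw [Nat.add_sub_cancel] at hrest
  rw [Finset.sum_range_succ, htop, add_comm]
  gcongr
  refine hrest.trans ?_
  gcongr
  exact six_mul_exp_mul_pi_le
end
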